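/- Let μ be a finite Borel measure on ℝ², σ a finite Borel measure on ℝ², f ∈ L²(σ), λ > 0, and let G = {x ∈ ℝ² : Re Ef(x) ≥ λ/4}. Then λ² μ(G)² ≤ 16 ‖f‖_{L²(σ)}² ∫ (σ̂ ∗ (χ_G dμ)) χ_G dμ. -/

import Mathlib

open MeasureTheory ENNReal Real

noncomputable section

abbrev Plane := ℝ × ℝ
/-- The Fourier kernel `e^{-2πi x·ξ}` on `ℝ²`. -/
def fourierKer (x ξ : Plane) : ℂ :=
  Complex.exp (((-2 * Real.pi * (x.1 * ξ.1 + x.2 * ξ.2) : ℝ) : ℂ) * Complex.I)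

/-- The extension operator `Ef(x) = ∫ e^{-2πi x·ξ} f(ξ) dσ(ξ)`. -/
def extOp (σ : Measure Plane) (f : Plane → ℂ) (x : Plane) : ℂ :=
  ∫ ξ, fourierKer x ξ * f ξ ∂σ

/-- The Fourier transform `σ̂(x) = ∫ e^{-2πi x·ξ} dσ(ξ)` of the measure `σ`. -/
def ftMeasure (σ : Measure Plane) (x : Plane) : ℂ := ∫ ξ, fourierKer x ξ ∂σ

/-- The `L²(σ)` norm of `f`. -/
def L2n (σ : Measure Plane) (f : Plane → ℂ) : ℝ := (∫ ξ, ‖f ξ‖ ^ 2 ∂σ) ^ ((1 : ℝ) / 2)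

lemma norm_fourierKer (x ξ : Plane) : ‖fourierKer x ξ‖ = 1 := by
  rw [fourierKer, Complex.norm_exp_ofReal_mul_I]

lemma conj_fourierKer (x ξ : Plane) :
    (starRingEnd ℂ) (fourierKer x ξ) = fourierKer (-x) ξ := by
  rw [fourierKer, fourierKer, ← Complex.exp_conj, map_mul, Complex.conj_I,
    Complex.conj_ofReal]
  congr 1
  simp only [Prod.fst_neg, Prod.snd_neg, Prod.fst_add, Prod.snd_add]
  push_cast
  ring

lemma mul_fourierKer (x y ξ : Plane) :
    fourierKer x ξ * fourierKer y ξ = fourierKer (x + y) ξ := by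
  rw [fourierKer, fourierKer, fourierKer, ← Complex.exp_add]
  congr 1
  simp only [Prod.fst_neg, Prod.snd_neg, Prod.fst_add, Prod.snd_add]
  push_cast
  ring

lemma cont_fourierKer : Continuous fun p : Plane × Plane => fourierKer p.1 p.2 := by
  unfold fourierKer
  fun_prop

lemma cont_fourierKer_right (x : Plane) : Continuous fun ξ => fourierKer x ξ := by
  unfold fourierKer
  fun_prop

lemma cont_fourierKer_left (ξ : Plane) : Continuous fun x => fourierKer x ξ := by
  unfold fourierKer
  fun_prop

lemma abs_fourierKer (x ξ : Plane) : ‖fourierKer x ξ‖ = 1 := by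
  rw [norm_fourierKer]

lemma cont_fourierKer_sub :
    Continuous (Function.uncurry fun (p : Plane × Plane) (ξ : Plane) =>
      fourierKer (p.1 - p.2) ξ) := by
  unfold fourierKer Function.uncurry
  fun_prop

set_option maxHeartbeats 1000000 in
/-- Auxiliary version of Statement 9 with a strongly measurable `f`. -/
theorem stmt9_aux (σ μ : Measure Plane) [IsFiniteMeasure σ] [IsFiniteMeasure μ]
    (f : Plane → ℂ) (hfm : StronglyMeasurable f) (hf2 : MemLp f 2 σ)
    (hf1 : Integrable f σ) (lam : ℝ) (hlam : 0 < lam) :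
    lam ^ 2 * (μ {x | lam / 4 ≤ (extOp σ f x).re}).toReal ^ 2 ≤
      16 * L2n σ f ^ 2 *
        (∫ x in {x | lam / 4 ≤ (extOp σ f x).re},
          (∫ y in {x | lam / 4 ≤ (extOp σ f x).re}, ftMeasure σ (x - y) ∂μ) ∂μ).re := by
  have hker := cont_fourierKer
  -- continuity of the extension operator
  have hEcont : Continuous (extOp σ f) := by
    unfold extOp
    refine continuous_of_dominated (bound := fun ξ => ‖f ξ‖) (fun x => ?_) (fun x => ?_)
      hf1.norm ?_
    · exact (cont_fourierKer_right x).aestronglyMeasurable.mul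
        hfm.aestronglyMeasurable
    · filter_upwards with ξ
      rw [norm_mul, norm_fourierKer, one_mul]
    · filter_upwards with ξ
      exact (cont_fourierKer_left ξ).mul continuous_const
  set G : Set Plane := {x | lam / 4 ≤ (extOp σ f x).re} with hGdef
  have hGmeas : MeasurableSet G :=
    (isClosed_le continuous_const (Complex.continuous_re.comp hEcont)).measurableSet
  set g : Plane → ℂ := fun ξ => ∫ x in G, fourierKer x ξ ∂μ with hgdef
  have hgcont : Continuous g := by
    rw [hgdef]
    refine continuous_of_dominated (bound := fun _ => (1 : ℝ)) (fun ξ => ?_) (fun ξ => ?_)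
      (integrable_const _) ?_
    · exact (cont_fourierKer_left ξ).aestronglyMeasurable
    · filter_upwards with x
      exact le_of_eq (norm_fourierKer _ _)
    · filter_upwards with x
      exact cont_fourierKer_right x
  have hgbd : ∀ ξ, ‖g ξ‖ ≤ (μ G).toReal := by
    intro ξ
    calc ‖g ξ‖ ≤ ∫ x in G, ‖fourierKer x ξ‖ ∂μ := norm_integral_le_integral_norm _
    _ = ∫ x in G, (1 : ℝ) ∂μ := by simp [abs_fourierKer]
    _ = (μ G).toReal := by simp [hGmeas, measureReal_def]
  have hg2 : MemLp g 2 σ := MemLp.of_bound hgcont.aestronglyMeasurable _ (ae_of_all _ hgbd)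
  -- Step A : lower bound on the set integral of Re ∘ Ef
  have hEbd : ∀ x, ‖extOp σ f x‖ ≤ ∫ ξ, ‖f ξ‖ ∂σ := by
    intro x
    calc ‖extOp σ f x‖ ≤ ∫ ξ, ‖fourierKer x ξ * f ξ‖ ∂σ := norm_integral_le_integral_norm _
    _ = ∫ ξ, ‖f ξ‖ ∂σ := by simp [abs_fourierKer]
  have hEint : Integrable (extOp σ f) μ :=
    (integrable_const _).mono' hEcont.aestronglyMeasurable (ae_of_all _ hEbd)
  have stepA : lam / 4 * (μ G).toReal ≤ ∫ x in G, (extOp σ f x).re ∂μ :=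
    setIntegral_ge_of_const_le_real hGmeas (measure_ne_top μ G) (fun x hx => hx)
      hEint.re.integrableOn
  -- Step B : Fubini, ∫_G Ef dμ = ∫ g f dσ
  have hFint : Integrable (fun p : Plane × Plane => fourierKer p.1 p.2 * f p.2)
      ((μ.restrict G).prod σ) := by
    have hmeas : AEStronglyMeasurable (fun p : Plane × Plane => fourierKer p.1 p.2 * f p.2)
        ((μ.restrict G).prod σ) :=
      hker.aestronglyMeasurable.mul
        ((hfm.comp_measurable measurable_snd).aestronglyMeasurable)
    rw [integrable_prod_iff hmeas]
    constructor
    · filter_upwards with x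
      exact hf1.bdd_mul (cont_fourierKer_right x).aestronglyMeasurable
        (c := 1) (ae_of_all _ fun ξ => le_of_eq (norm_fourierKer _ _))
    · have h : (fun x => ∫ ξ, ‖fourierKer x ξ * f ξ‖ ∂σ) = fun _ => ∫ ξ, ‖f ξ‖ ∂σ := by
        funext x
        simp [abs_fourierKer]
      rw [h]
      exact integrable_const _
  have stepB : ∫ x in G, extOp σ f x ∂μ = ∫ ξ, g ξ * f ξ ∂σ := by
    unfold extOp
    rw [integral_integral_swap hFint]
    refine integral_congr_ae (ae_of_all _ fun ξ => ?_)
    rw [hgdef]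
    exact integral_mul_const (f ξ) _
  -- Step C : Cauchy-Schwarz
  have hrpow2 : ∀ x : ℝ, x ^ (2 : ℝ) = x ^ 2 := fun x => by
    rw [show (2 : ℝ) = ((2 : ℕ) : ℝ) by norm_num, Real.rpow_natCast]
  have hof2 : (ENNReal.ofReal 2) = 2 := by norm_num
  have hCS : (∫ ξ, g ξ * f ξ ∂σ).re ≤
      Real.sqrt (∫ ξ, ‖g ξ‖ ^ 2 ∂σ) * L2n σ f := by
    have h := integral_mul_norm_le_Lp_mul_Lq (μ := σ) (f := g) (g := f) (p := 2) (q := 2)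
      ⟨by norm_num, by norm_num, by norm_num⟩ (hof2 ▸ hg2) (hof2 ▸ hf2)
    simp only [hrpow2] at h
    calc (∫ ξ, g ξ * f ξ ∂σ).re ≤ ‖∫ ξ, g ξ * f ξ ∂σ‖ := Complex.re_le_norm _
    _ = ‖∫ ξ, g ξ * f ξ ∂σ‖ := rfl
    _ ≤ ∫ ξ, ‖g ξ * f ξ‖ ∂σ := norm_integral_le_integral_norm _
    _ = ∫ ξ, ‖g ξ‖ * ‖f ξ‖ ∂σ := by simp [norm_mul]
    _ ≤ (∫ ξ, ‖g ξ‖ ^ 2 ∂σ) ^ ((1 : ℝ) / 2) * (∫ ξ, ‖f ξ‖ ^ 2 ∂σ) ^ ((1 : ℝ) / 2) := h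
    _ = Real.sqrt (∫ ξ, ‖g ξ‖ ^ 2 ∂σ) * L2n σ f := by
        rw [L2n, Real.sqrt_eq_rpow]
  -- Step D : the double integral equals ∫ ‖g‖²
  set ρ : Measure (Plane × Plane) := (μ.restrict G).prod (μ.restrict G) with hρdef
  have hftcont : Continuous (ftMeasure σ) := by
    unfold ftMeasure
    refine continuous_of_dominated (bound := fun _ => (1 : ℝ)) (fun x => ?_) (fun x => ?_)
      (integrable_const _) ?_
    · exact (cont_fourierKer_right x).aestronglyMeasurable
    · filter_upwards with ξ
      exact le_of_eq (norm_fourierKer _ _)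
    · filter_upwards with ξ
      exact cont_fourierKer_left ξ
  have hftbd : ∀ z, ‖ftMeasure σ z‖ ≤ (σ Set.univ).toReal := by
    intro z
    calc ‖ftMeasure σ z‖ ≤ ∫ ξ, ‖fourierKer z ξ‖ ∂σ := norm_integral_le_integral_norm _
    _ = ∫ _, (1 : ℝ) ∂σ := by simp [abs_fourierKer]
    _ = (σ Set.univ).toReal := by simp [measureReal_def]
  have hρint : Integrable (fun p : Plane × Plane => ftMeasure σ (p.1 - p.2)) ρ :=
    (integrable_const _).mono'
      ((hftcont.comp (continuous_fst.sub continuous_snd)).aestronglyMeasurable)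
      (ae_of_all _ fun p => hftbd _)
  have hKint : Integrable (Function.uncurry fun (p : Plane × Plane) (ξ : Plane) =>
      fourierKer (p.1 - p.2) ξ) (ρ.prod σ) := by
    refine (integrable_const (1 : ℝ)).mono' cont_fourierKer_sub.aestronglyMeasurable ?_
    filter_upwards with q
    simp only [Function.uncurry]
    exact le_of_eq (norm_fourierKer _ _)
  have stepD : (∫ x in G, ∫ y in G, ftMeasure σ (x - y) ∂μ ∂μ).re = ∫ ξ, ‖g ξ‖ ^ 2 ∂σ := by
    have h1 : ∫ x in G, ∫ y in G, ftMeasure σ (x - y) ∂μ ∂μ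
        = ∫ p, ftMeasure σ (p.1 - p.2) ∂ρ := (integral_prod _ hρint).symm
    have h2 : ∫ p, ftMeasure σ (p.1 - p.2) ∂ρ
        = ∫ ξ, ∫ p, fourierKer (p.1 - p.2) ξ ∂ρ ∂σ := by
      unfold ftMeasure
      exact integral_integral_swap hKint
    have h3 : ∀ ξ, ∫ p, fourierKer (p.1 - p.2) ξ ∂ρ = g ξ * (starRingEnd ℂ) (g ξ) := by
      intro ξ
      have heq : ∀ p : Plane × Plane,
          fourierKer (p.1 - p.2) ξ = fourierKer p.1 ξ * fourierKer (-p.2) ξ := by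
        intro p
        rw [mul_fourierKer, sub_eq_add_neg]
      calc ∫ p, fourierKer (p.1 - p.2) ξ ∂ρ
          = ∫ p : Plane × Plane, fourierKer p.1 ξ * fourierKer (-p.2) ξ ∂ρ := by
            simp only [heq]
      _ = (∫ x in G, fourierKer x ξ ∂μ) * ∫ y in G, fourierKer (-y) ξ ∂μ :=
            integral_prod_mul (fun x => fourierKer x ξ) (fun y => fourierKer (-y) ξ)
      _ = g ξ * (starRingEnd ℂ) (g ξ) := by
            rw [hgdef]
            congr 1
            rw [← integral_conj]
            exact integral_congr_ae (ae_of_all _ fun y => (conj_fourierKer y ξ).symm)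
    have h4 : ∫ ξ, g ξ * (starRingEnd ℂ) (g ξ) ∂σ = ((∫ ξ, ‖g ξ‖ ^ 2 ∂σ : ℝ) : ℂ) := by
      calc ∫ ξ, g ξ * (starRingEnd ℂ) (g ξ) ∂σ
          = ∫ ξ, ((‖g ξ‖ ^ 2 : ℝ) : ℂ) ∂σ := by
            refine integral_congr_ae (ae_of_all _ fun ξ => ?_)
            show g ξ * (starRingEnd ℂ) (g ξ) = ((‖g ξ‖ ^ 2 : ℝ) : ℂ)
            rw [Complex.mul_conj, Complex.normSq_eq_norm_sq]
      _ = ((∫ ξ, ‖g ξ‖ ^ 2 ∂σ : ℝ) : ℂ) := integral_ofReal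
    rw [h1, h2]
    have h5 : ∫ ξ, ∫ p, fourierKer (p.1 - p.2) ξ ∂ρ ∂σ
        = ((∫ ξ, ‖g ξ‖ ^ 2 ∂σ : ℝ) : ℂ) := by
      rw [← h4]
      exact integral_congr_ae (ae_of_all _ fun ξ => h3 ξ)
    rw [h5, Complex.ofReal_re]
  -- assemble
  set M : ℝ := (μ G).toReal with hM
  set A : ℝ := ∫ ξ, ‖g ξ‖ ^ 2 ∂σ with hA
  set N : ℝ := L2n σ f with hN
  have hA0 : 0 ≤ A := integral_nonneg fun ξ => by positivity
  have hkey : lam / 4 * M ≤ Real.sqrt A * N := by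
    calc lam / 4 * M ≤ ∫ x in G, (extOp σ f x).re ∂μ := stepA
    _ = (∫ x in G, extOp σ f x ∂μ).re := integral_re hEint.integrableOn
    _ = (∫ ξ, g ξ * f ξ ∂σ).re := by rw [stepB]
    _ ≤ Real.sqrt A * N := hCS
  have hM0 : 0 ≤ M := ENNReal.toReal_nonneg
  have h0 : 0 ≤ lam / 4 * M := by positivity
  have hsq : (lam / 4 * M) ^ 2 ≤ (Real.sqrt A * N) ^ 2 := by
    exact pow_le_pow_left₀ h0 hkey 2
  have hsqrt : Real.sqrt A ^ 2 = A := Real.sq_sqrt hA0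
  rw [stepD]
  nlinarith [hsq, hsqrt, sq_nonneg N, sq_nonneg (Real.sqrt A)]

/-- with `G = {Re Ef ≥ λ/4}`, one has
`λ² μ(G)² ≤ 16 ‖f‖_{L²(σ)}² ∫ (σ̂ ∗ (χ_G dμ)) χ_G dμ`. -/
theorem stmt9 (σ μ : Measure Plane) [IsFiniteMeasure σ] [IsFiniteMeasure μ]
    (f : Plane → ℂ) (hf2 : MemLp f 2 σ) (hf1 : Integrable f σ)
    (lam : ℝ) (hlam : 0 < lam) :
    lam ^ 2 * (μ {x | lam / 4 ≤ (extOp σ f x).re}).toReal ^ 2 ≤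
      16 * L2n σ f ^ 2 *
        (∫ x in {x | lam / 4 ≤ (extOp σ f x).re},
          (∫ y in {x | lam / 4 ≤ (extOp σ f x).re}, ftMeasure σ (x - y) ∂μ) ∂μ).re := by
  set f' : Plane → ℂ := hf1.1.mk f with hf'def
  have hff' : f =ᵐ[σ] f' := hf1.1.ae_eq_mk
  have hE : ∀ x, extOp σ f x = extOp σ f' x := fun x =>
    integral_congr_ae (hff'.mono fun ξ h => by simp only [h])
  have hGeq : {x : Plane | lam / 4 ≤ (extOp σ f x).re}
      = {x : Plane | lam / 4 ≤ (extOp σ f' x).re} := by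
    ext x
    rw [Set.mem_setOf_eq, Set.mem_setOf_eq, hE]
  have hL : L2n σ f = L2n σ f' := by
    unfold L2n
    congr 1
    exact integral_congr_ae (hff'.mono fun ξ h => by simp only [h])
  rw [hGeq, hL]
  exact stmt9_aux σ μ f' hf1.1.stronglyMeasurable_mk (hf2.ae_eq hff')
    (hf1.congr hff') lam hlam
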